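/- Assume X > 0 and h > 0. For every x ≥ 0, the derivative of the map x ↦ SIR1(x,h) equals (2·p_t/(p_M·(x² + h²)²))·(X·x² − (X² + Y²)·x − X·h²); consequently this derivative is nonnegative if x ≥ Ψˣ(h) and strictly negative if 0 ≤ x < Ψˣ(h), where Ψˣ(h) = (X² + Y² + sqrt((X² + Y²)² + 4·X²·h²))/(2·X). -/

import Mathlib

/-- SIR at the UAV located at (x,0,h). -/
noncomputable def SIR1 (pt pM X Y x h : ℝ) : ℝ :=
  pt * ((x - X) ^ 2 + Y ^ 2 + h ^ 2) / (pM * (x ^ 2 + h ^ 2))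

/-- The horizontal stationary point Ψˣ(h). -/
noncomputable def PsiX (X Y h : ℝ) : ℝ :=
  (X ^ 2 + Y ^ 2 + Real.sqrt ((X ^ 2 + Y ^ 2) ^ 2 + 4 * X ^ 2 * h ^ 2)) / (2 * X)

/-! The quotient rule gives the derivative of `SIR1`; its sign is that of a quadratic in `x`
with positive leading coefficient and negative constant term, so its smaller root is negative
and on `x ≥ 0` the sign changes exactly at the larger root, which is `Ψˣ(h)`. -/

theorem quadratic_factor_of_sq_eq {a b c s : ℝ} (ha : a ≠ 0) (hs : s ^ 2 = b ^ 2 + 4 * a * c)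
    (x : ℝ) :
    a * x ^ 2 - b * x - c = a * (x - (b + s) / (2 * a)) * (x - (b - s) / (2 * a)) := by
  field_simp
  linear_combination hs

theorem quadratic_nonneg_iff_larger_root_le {a b c x : ℝ} (ha : 0 < a) (hc : 0 < c)
    (hx : 0 ≤ x) :
    0 ≤ a * x ^ 2 - b * x - c ↔ (b + √(b ^ 2 + 4 * a * c)) / (2 * a) ≤ x := by
  set s := √(b ^ 2 + 4 * a * c)
  have hs : s ^ 2 = b ^ 2 + 4 * a * c := Real.sq_sqrt (by positivity)
  have hbs : b < s := by
    have : b ^ 2 < s ^ 2 := by rw [hs]; nlinarith [mul_pos ha hc]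
    exact lt_of_pow_lt_pow_left₀ 2 (Real.sqrt_nonneg _) this
  have hsmaller : (b - s) / (2 * a) < x :=
    (div_neg_of_neg_of_pos (by linarith) (by positivity)).trans_le hx
  rw [quadratic_factor_of_sq_eq ha.ne' hs, mul_nonneg_iff_of_pos_right (by linarith),
    mul_nonneg_iff_of_pos_left ha, sub_nonneg]

theorem hasDerivAt_SIR1 (pt pM X Y : ℝ) {h : ℝ} (hpM : pM ≠ 0) (hh : h ≠ 0) (x : ℝ) :
    HasDerivAt (fun t => SIR1 pt pM X Y t h)
      (2 * pt / (pM * (x ^ 2 + h ^ 2) ^ 2) * (X * x ^ 2 - (X ^ 2 + Y ^ 2) * x - X * h ^ 2)) x := by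
  have hnum : HasDerivAt (fun t => pt * ((t - X) ^ 2 + Y ^ 2 + h ^ 2)) (pt * (2 * (x - X))) x := by
    simpa using (((((hasDerivAt_id x).sub_const X).pow 2).add_const (Y ^ 2)).add_const
      (h ^ 2)).const_mul pt
  have hden : HasDerivAt (fun t => pM * (t ^ 2 + h ^ 2)) (pM * (2 * x)) x := by
    simpa using (((hasDerivAt_id x).pow 2).add_const (h ^ 2)).const_mul pM
  have hpos : 0 < x ^ 2 + h ^ 2 := by positivity
  refine (hnum.div hden (mul_ne_zero hpM hpos.ne')).congr_deriv ?_
  field_simp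
  ring

theorem stmt1_general (X Y pt pM : ℝ)
    (hX : 0 < X) (hpt : 0 < pt) (hpM : 0 < pM)
    (h : ℝ) (hh : 0 < h) :
    ∀ x : ℝ, 0 ≤ x →
      HasDerivAt (fun t => SIR1 pt pM X Y t h)
        (2 * pt / (pM * (x ^ 2 + h ^ 2) ^ 2) *
          (X * x ^ 2 - (X ^ 2 + Y ^ 2) * x - X * h ^ 2)) x ∧
      (x ≥ PsiX X Y h →
        0 ≤ 2 * pt / (pM * (x ^ 2 + h ^ 2) ^ 2) *
          (X * x ^ 2 - (X ^ 2 + Y ^ 2) * x - X * h ^ 2)) ∧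
      (x < PsiX X Y h →
        2 * pt / (pM * (x ^ 2 + h ^ 2) ^ 2) *
          (X * x ^ 2 - (X ^ 2 + Y ^ 2) * x - X * h ^ 2) < 0) := by
  intro x hx
  have hfactor : 0 < 2 * pt / (pM * (x ^ 2 + h ^ 2) ^ 2) := by positivity
  have hsign : 0 ≤ X * x ^ 2 - (X ^ 2 + Y ^ 2) * x - X * h ^ 2 ↔ PsiX X Y h ≤ x := by
    rw [quadratic_nonneg_iff_larger_root_le hX (by positivity) hx, PsiX]
    ring_nf
  refine ⟨hasDerivAt_SIR1 pt pM X Y hpM.ne' hh.ne' x, fun hge => ?_, fun hlt => ?_⟩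
  · exact mul_nonneg hfactor.le (hsign.mpr hge)
  · exact mul_neg_of_pos_of_neg hfactor (not_le.mp (hsign.not.mpr (not_le.mpr hlt)))

theorem stmt1 (D X Y pt pu pM : ℝ) (hD : 0 < D) (hX0 : 0 ≤ X) (hXD : X ≤ D)
    (hX : 0 < X) (hpt : 0 < pt) (hpu : 0 < pu) (hpM : 0 < pM)
    (h : ℝ) (hh : 0 < h) :
    ∀ x : ℝ, 0 ≤ x →
      HasDerivAt (fun t => SIR1 pt pM X Y t h)
        (2 * pt / (pM * (x ^ 2 + h ^ 2) ^ 2) *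
          (X * x ^ 2 - (X ^ 2 + Y ^ 2) * x - X * h ^ 2)) x ∧
      (x ≥ PsiX X Y h →
        0 ≤ 2 * pt / (pM * (x ^ 2 + h ^ 2) ^ 2) *
          (X * x ^ 2 - (X ^ 2 + Y ^ 2) * x - X * h ^ 2)) ∧
      (x < PsiX X Y h →
        2 * pt / (pM * (x ^ 2 + h ^ 2) ^ 2) *
          (X * x ^ 2 - (X ^ 2 + Y ^ 2) * x - X * h ^ 2) < 0) :=
  stmt1_general X Y pt pM hX hpt hpM h hh
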